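/- Fix a > 0, β ∈ [0,1), C > 0, and reals (λ_i)_{i≥1} with -β(2+ia) ≤ λ_i ≤ C(2+ia) for all i. Let (V_i)_{i≥1} be i.i.d. exponential with rate 2 and set U_i = 2V_i/(2+ia+λ_i), V_{a,i} = 2V_i/(2+ia). If limsup_{d→∞} ((log log d)/(log d))·Σ_{i=1}^d |λ_i|/i² = 0, then almost surely limsup_{d→∞} ((log log d)/(log d))·Σ_{i=1}^d |V_{a,i} - U_i| = 0. -/

import Mathlib

/-!
Each summand is at most `K · (|λ_i| / i²) · V_i` with `K = 2 / ((1 - β) a²)`, and the bounds on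
`λ_i` give `|λ_i| / i² = O(1 / i)`, so the weights are square-summable. Centring `V_i` at its
mean `1/2`, the weighted sums `∑ (|λ_i| / i²) (V_i - 1/2)` are partial sums of independent
centred variables with summable variances, i.e. an L²-bounded martingale, and converge almost
surely (Kolmogorov's one-series theorem); multiplied by `log log d / log d → 0` they vanish. The
remaining mean part `½ ∑ |λ_i| / i²` is controlled by the hypothesis on `λ`.
-/

open MeasureTheory ProbabilityTheory Filter Real
open scoped ENNReal Nat Topology
open Finset

/-- `X` is an exponential random variable with rate `r` under `μ`. -/
def IsExpRV {Ω : Type*} [MeasurableSpace Ω] (μ : Measure Ω) (r : ℝ) (X : Ω → ℝ) : Prop :=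
  Measurable X ∧ ∀ t : ℝ, 0 ≤ t → μ {ω | X ω > t} = ENNReal.ofReal (Real.exp (-(r * t)))

lemma integral_pow_mul_exp_neg_mul_Ioi {r : ℝ} (hr : 0 < r) (n : ℕ) :
    ∫ t in Set.Ioi (0 : ℝ), t ^ n * exp (-(r * t)) = n ! / r ^ (n + 1) := by
  have h := Real.integral_rpow_mul_exp_neg_mul_Ioi (a := n + 1) (by positivity) hr
  rw [add_sub_cancel_right, Real.Gamma_nat_eq_factorial, ← Nat.cast_succ, Real.rpow_natCast,
    div_pow, one_pow, one_div_mul_eq_div] at h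
  rw [← h]
  exact setIntegral_congr_fun measurableSet_Ioi fun t _ => by rw [Real.rpow_natCast]

namespace IsExpRV

variable {Ω : Type*} [MeasurableSpace Ω] {μ : Measure Ω} [IsProbabilityMeasure μ]
  {r : ℝ} {X : Ω → ℝ}

lemma ae_pos (hX : IsExpRV μ r X) : ∀ᵐ ω ∂μ, 0 < X ω := by
  have h := hX.2 0 le_rfl
  rw [mul_zero, neg_zero, exp_zero, ENNReal.ofReal_one] at h
  exact (ae_iff_prob_eq_one
    (measurableSet_setOfPred.1 (measurableSet_lt measurable_const hX.1))).2 h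

lemma lintegral_pow_succ (hX : IsExpRV μ r X) (hr : 0 < r) (n : ℕ) :
    ∫⁻ ω, ENNReal.ofReal (X ω ^ (n + 1)) ∂μ = ENNReal.ofReal ((n + 1)! / r ^ (n + 1)) := by
  have hg : ∀ x, ∫ t in (0 : ℝ)..x, (n + 1) * t ^ n = x ^ (n + 1) := fun x => by
    rw [intervalIntegral.integral_const_mul, integral_pow]
    field_simp
    ring
  have hpos : ∀ᵐ t ∂volume.restrict (Set.Ioi (0 : ℝ)), 0 < t := ae_restrict_mem measurableSet_Ioi
  have hint : IntegrableOn (fun t : ℝ => (n + 1) * (t ^ n * exp (-(r * t)))) (Set.Ioi 0) := by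
    refine Integrable.of_integral_ne_zero ?_
    rw [integral_const_mul, integral_pow_mul_exp_neg_mul_Ioi hr]
    positivity
  calc ∫⁻ ω, ENNReal.ofReal (X ω ^ (n + 1)) ∂μ
      = ∫⁻ t in Set.Ioi 0, μ {ω | t < X ω} * ENNReal.ofReal ((n + 1) * t ^ n) := by
        simp_rw [← hg]
        exact lintegral_comp_eq_lintegral_meas_lt_mul μ (hX.ae_pos.mono fun _ h => h.le)
          hX.1.aemeasurable (fun _ _ => (by fun_prop : Continuous _).intervalIntegrable _ _)
          (hpos.mono fun t ht => by positivity)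
    _ = ∫⁻ t in Set.Ioi 0, ENNReal.ofReal ((n + 1) * (t ^ n * exp (-(r * t)))) := by
        refine setLIntegral_congr_fun measurableSet_Ioi fun t ht => ?_
        have htail : μ {ω | t < X ω} = ENNReal.ofReal (exp (-(r * t))) := hX.2 t (le_of_lt ht)
        rw [htail, ← ENNReal.ofReal_mul (exp_pos _).le]
        ring_nf
    _ = ENNReal.ofReal ((n + 1)! / r ^ (n + 1)) := by
        rw [← ofReal_integral_eq_lintegral_ofReal hint (hpos.mono fun t ht => by positivity),
          integral_const_mul, integral_pow_mul_exp_neg_mul_Ioi hr, Nat.factorial_succ, pow_succ]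
        congr 1
        push_cast
        ring

lemma integral_pow_succ (hX : IsExpRV μ r X) (hr : 0 < r) (n : ℕ) :
    ∫ ω, X ω ^ (n + 1) ∂μ = (n + 1)! / r ^ (n + 1) := by
  rw [integral_eq_lintegral_of_nonneg_ae (hX.ae_pos.mono fun _ h => by positivity)
    (hX.1.pow_const _).aestronglyMeasurable, hX.lintegral_pow_succ hr,
    ENNReal.toReal_ofReal (by positivity)]

lemma integral_eq (hX : IsExpRV μ r X) (hr : 0 < r) : μ[X] = r⁻¹ := by
  simpa using hX.integral_pow_succ hr 0

lemma integral_sq (hX : IsExpRV μ r X) (hr : 0 < r) : ∫ ω, X ω ^ 2 ∂μ = 2 / r ^ 2 := by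
  simpa using hX.integral_pow_succ hr 1

lemma memLp_two (hX : IsExpRV μ r X) (hr : 0 < r) : MemLp X 2 μ :=
  (memLp_two_iff_integrable_sq hX.1.aestronglyMeasurable).2 <|
    Integrable.of_integral_ne_zero (by rw [hX.integral_sq hr]; positivity)

lemma variance_eq (hX : IsExpRV μ r X) (hr : 0 < r) : Var[X; μ] = r⁻¹ ^ 2 := by
  rw [variance_eq_sub (hX.memLp_two hr), hX.integral_eq hr]
  simp only [Pi.pow_apply, hX.integral_sq hr]
  ring

end IsExpRV

section Kolmogorov

variable {Ω : Type*} [MeasurableSpace Ω] {μ : Measure Ω} [IsProbabilityMeasure μ]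

lemma eLpNorm_one_le_sqrt_variance {X : Ω → ℝ} (hX : MemLp X 2 μ) (h0 : μ[X] = 0) :
    eLpNorm X 1 μ ≤ ENNReal.ofReal √(Var[X; μ]) := by
  refine (eLpNorm_le_eLpNorm_of_exponent_le one_le_two hX.1).trans_eq ?_
  rw [hX.eLpNorm_eq_integral_rpow_norm two_ne_zero ENNReal.ofNat_ne_top,
    variance_of_integral_eq_zero hX.aemeasurable h0, sqrt_eq_rpow]
  norm_num [Real.norm_eq_abs]

namespace ProbabilityTheory.iIndepFun

variable {Y : ℕ → Ω → ℝ}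

lemma martingale_sum_range_succ (hY : ∀ i, StronglyMeasurable (Y i))
    (hind : iIndepFun Y μ) (hint : ∀ i, Integrable (Y i) μ) (hmean : ∀ i, μ[Y i] = 0) :
    Martingale (fun n => ∑ i ∈ range (n + 1), Y i) (Filtration.natural Y hY) μ := by
  set ℱ := Filtration.natural Y hY
  have hadapted : StronglyAdapted ℱ fun n => ∑ i ∈ range (n + 1), Y i :=
    fun n => Finset.stronglyMeasurable_sum _ fun i hi =>
      (Filtration.stronglyAdapted_natural hY i).mono (ℱ.mono (Nat.lt_succ_iff.1 (mem_range.1 hi)))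
  have hint_sum : ∀ n, Integrable (∑ i ∈ range (n + 1), Y i) μ :=
    fun n => integrable_finsetSum' _ fun i _ => hint i
  refine martingale_nat hadapted hint_sum fun n => ?_
  have hsucc : μ[Y (n + 1)|ℱ n] =ᵐ[μ] fun _ => 0 := by
    simpa [hmean] using hind.condExp_natural_ae_eq_of_lt hY n.lt_succ_self
  rw [sum_range_succ _ (n + 1)]
  filter_upwards [condExp_add (hint_sum n) (hint (n + 1)) (ℱ n), hsucc] with ω hadd hzero
  rw [hadd, Pi.add_apply, hzero, condExp_of_stronglyMeasurable (ℱ.le n) (hadapted n) (hint_sum n),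
    add_zero]

/-- Kolmogorov's one-series theorem. -/
theorem ae_exists_tendsto_sum_sub_integral (hY : ∀ i, Measurable (Y i)) (hind : iIndepFun Y μ)
    (hL2 : ∀ i, MemLp (Y i) 2 μ) (hvar : Summable fun i => Var[Y i; μ]) :
    ∀ᵐ ω ∂μ, ∃ c, Tendsto (fun n => ∑ i ∈ range n, (Y i ω - μ[Y i])) atTop (𝓝 c) := by
  set Z : ℕ → Ω → ℝ := fun i ω => Y i ω - μ[Y i]
  have hZm : ∀ i, StronglyMeasurable (Z i) := fun i => ((hY i).sub_const _).stronglyMeasurable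
  have hZind : iIndepFun Z μ := by
    exact hind.comp (fun i y => y - μ[Y i]) fun i => measurable_sub_const _
  have hZL2 : ∀ i, MemLp (Z i) 2 μ := fun i => (hL2 i).sub (memLp_const _)
  have hZmean : ∀ i, μ[Z i] = 0 := fun i => by
    simp [Z, integral_sub ((hL2 i).integrable one_le_two) (integrable_const _)]
  have hbdd : ∀ n, eLpNorm (∑ i ∈ range (n + 1), Z i) 1 μ ≤
      ENNReal.ofReal √(∑' i, Var[Y i; μ]) := by
    intro n
    have hsum_mean : μ[∑ i ∈ range (n + 1), Z i] = 0 := by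
      simp_rw [Finset.sum_apply]
      rw [integral_finsetSum _ fun i _ => (hZL2 i).integrable one_le_two]
      simp [hZmean]
    refine (eLpNorm_one_le_sqrt_variance (memLp_finsetSum' _ fun i _ => hZL2 i) hsum_mean).trans ?_
    rw [IndepFun.variance_sum (fun i _ => hZL2 i) fun i _ j _ hij => hZind.indepFun hij]
    gcongr
    refine (sum_le_sum fun i _ => (variance_sub_const (hY i).aestronglyMeasurable _).le).trans ?_
    exact hvar.sum_le_tsum _ fun i _ => variance_nonneg _ _
  filter_upwards [((hZind.martingale_sum_range_succ hZm (fun i => (hZL2 i).integrable one_le_two)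
    hZmean).submartingale.exists_ae_tendsto_of_bdd hbdd)] with ω ⟨c, hc⟩
  exact ⟨c, (tendsto_add_atTop_iff_nat 1).1 (by simpa [Z] using hc)⟩

theorem ae_exists_tendsto_sum_mul_sub_inv {V : ℕ → Ω → ℝ} {w : ℕ → ℝ} {r : ℝ}
    (hind : iIndepFun V μ) (hexp : ∀ i, IsExpRV μ r (V i)) (hr : 0 < r)
    (hw : Summable fun i => w i ^ 2) :
    ∀ᵐ ω ∂μ, ∃ S, Tendsto (fun n => ∑ i ∈ range n, w i * (V i ω - r⁻¹)) atTop (𝓝 S) := by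
  have := ae_exists_tendsto_sum_sub_integral (Y := fun i ω => w i * V i ω)
    (fun i => (hexp i).1.const_mul _)
    (hind.comp (fun i x => w i * x) fun i => measurable_const_mul _)
    (fun i => ((hexp i).memLp_two hr).const_mul _)
    ((hw.mul_right (r⁻¹ ^ 2)).congr fun i => by rw [variance_const_mul, (hexp i).variance_eq hr])
  simpa only [integral_const_mul, (hexp _).integral_eq hr, ← mul_sub] using this

end ProbabilityTheory.iIndepFun

end Kolmogorov

lemma sum_Icc_one_eq_sum_range {M : Type*} [AddCommMonoid M] (f : ℕ → M) (d : ℕ) :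
    ∑ i ∈ Icc 1 d, f i = ∑ i ∈ range d, f (i + 1) := by
  rw [range_eq_Ico, sum_Ico_add' f 0 d 1]
  rfl

lemma abs_div_sub_div_add_le {a β x l v : ℝ} (ha : 0 < a) (hβ : β < 1) (hx : 0 < x)
    (hl : -β * (2 + x * a) ≤ l) :
    |2 * v / (2 + x * a) - 2 * v / (2 + x * a + l)| ≤
      2 / ((1 - β) * a ^ 2) * (|l| / x ^ 2) * |v| := by
  have hA : 0 < 2 + x * a := by positivity
  have hβ' : 0 < 1 - β := by linarith
  have hB : (1 - β) * (2 + x * a) ≤ 2 + x * a + l := by linarith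
  have hB0 : 0 < 2 + x * a + l := lt_of_lt_of_le (by positivity) hB
  have hden : (1 - β) * a ^ 2 * x ^ 2 ≤ (2 + x * a) * (2 + x * a + l) :=
    calc (1 - β) * a ^ 2 * x ^ 2 = (1 - β) * (x * a) ^ 2 := by ring
      _ ≤ (1 - β) * (2 + x * a) ^ 2 := by gcongr; linarith
      _ ≤ (2 + x * a) * (2 + x * a + l) := by nlinarith
  have hdiff : 2 * v / (2 + x * a) - 2 * v / (2 + x * a + l)
      = 2 * v * l / ((2 + x * a) * (2 + x * a + l)) := by
    field_simp
    ring
  calc |2 * v / (2 + x * a) - 2 * v / (2 + x * a + l)|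
      = 2 * |v| * |l| / ((2 + x * a) * (2 + x * a + l)) := by
        rw [hdiff, abs_div, abs_mul, abs_mul, abs_two, abs_of_pos (mul_pos hA hB0)]
    _ ≤ 2 * |v| * |l| / ((1 - β) * a ^ 2 * x ^ 2) :=
        div_le_div_of_nonneg_left (by positivity) (by positivity) hden
    _ = 2 / ((1 - β) * a ^ 2) * (|l| / x ^ 2) * |v| := by
        field_simp

lemma sum_abs_div_sub_div_add_le {a β m : ℝ} {lam v : ℕ → ℝ} (ha : 0 < a) (hβ : β < 1)
    (hlb : ∀ i : ℕ, -β * (2 + i * a) ≤ lam i) (hv : ∀ i, 0 ≤ v i) (d : ℕ) :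
    ∑ i ∈ Icc 1 d, |2 * v i / (2 + i * a) - 2 * v i / (2 + i * a + lam i)| ≤
      2 / ((1 - β) * a ^ 2) *
        (∑ i ∈ range d, |lam (i + 1)| / ((i + 1 : ℕ) : ℝ) ^ 2 * (v (i + 1) - m) +
          m * ∑ i ∈ Icc 1 d, |lam i| / (i : ℝ) ^ 2) :=
  calc ∑ i ∈ Icc 1 d, |2 * v i / (2 + i * a) - 2 * v i / (2 + i * a + lam i)|
      ≤ ∑ i ∈ Icc 1 d, 2 / ((1 - β) * a ^ 2) * (|lam i| / (i : ℝ) ^ 2 * v i) :=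
        sum_le_sum fun i hi => by
          have hi : (0 : ℝ) < i := by exact_mod_cast (mem_Icc.1 hi).1
          have := abs_div_sub_div_add_le (v := v i) ha hβ hi (hlb i)
          rwa [abs_of_nonneg (hv i), mul_assoc] at this
    _ = _ := by
        rw [← mul_sum]
        simp only [sum_Icc_one_eq_sum_range, mul_sub, sum_sub_distrib, ← sum_mul]
        ring

lemma abs_div_sq_le {a β C x l : ℝ} (ha : 0 ≤ a) (hx : 1 ≤ x)
    (hlb : -β * (2 + x * a) ≤ l) (hub : l ≤ C * (2 + x * a)) :
    |l| / x ^ 2 ≤ max β C * (2 + a) / x := by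
  have hA : 0 < 2 + x * a := by nlinarith
  have hl : |l| ≤ max β C * (2 + x * a) :=
    abs_le.2 ⟨by nlinarith [le_max_left β C], by nlinarith [le_max_right β C]⟩
  have hM : 0 ≤ max β C := nonneg_of_mul_nonneg_left ((abs_nonneg l).trans hl) hA
  rw [div_le_div_iff₀ (by positivity) (by positivity)]
  nlinarith [mul_le_mul_of_nonneg_left (by nlinarith : 2 + x * a ≤ (2 + a) * x) hM]

lemma summable_sq_abs_div_sq {a β C : ℝ} {lam : ℕ → ℝ} (ha : 0 ≤ a)
    (hlb : ∀ i : ℕ, -β * (2 + i * a) ≤ lam i) (hub : ∀ i : ℕ, lam i ≤ C * (2 + i * a)) :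
    Summable fun i : ℕ => (|lam (i + 1)| / ((i + 1 : ℕ) : ℝ) ^ 2) ^ 2 := by
  refine Summable.of_nonneg_of_le (fun _ => sq_nonneg _) (fun i => ?_) <|
    ((summable_nat_add_iff 1).2 (summable_nat_pow_inv.2 one_lt_two)).mul_left
      ((max β C * (2 + a)) ^ 2)
  calc (|lam (i + 1)| / ((i + 1 : ℕ) : ℝ) ^ 2) ^ 2 ≤ (max β C * (2 + a) / (i + 1 : ℕ)) ^ 2 :=
        pow_le_pow_left₀ (by positivity)
          (abs_div_sq_le ha (by simp) (hlb (i + 1)) (hub (i + 1))) 2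
    _ = (max β C * (2 + a)) ^ 2 * ((i + 1 : ℕ) ^ 2 : ℝ)⁻¹ := by ring

lemma tendsto_log_natCast_atTop : Tendsto (fun d : ℕ => Real.log d) atTop atTop :=
  tendsto_log_atTop.comp tendsto_natCast_atTop_atTop

lemma tendsto_log_log_div_log :
    Tendsto (fun d : ℕ => Real.log (Real.log d) / Real.log d) atTop (𝓝 0) :=
  isLittleO_log_id_atTop.tendsto_div_nhds_zero.comp tendsto_log_natCast_atTop

lemma eventually_log_log_div_log_nonneg :
    ∀ᶠ d : ℕ in atTop, 0 ≤ Real.log (Real.log d) / Real.log d :=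
  (tendsto_log_natCast_atTop.eventually_ge_atTop 1).mono fun _ hd =>
    div_nonneg (log_nonneg hd) (zero_le_one.trans hd)

theorem perturbed_coupling_L1_distance_vanishes_general
    {Ω : Type*} [MeasurableSpace Ω] (μ : Measure Ω) [IsProbabilityMeasure μ]
    (a β C : ℝ) (ha : 0 < a) (hβ1 : β < 1)
    (lam : ℕ → ℝ)
    (hlam_lb : ∀ i : ℕ, -β * (2 + i * a) ≤ lam i)
    (hlam_ub : ∀ i : ℕ, lam i ≤ C * (2 + i * a))
    (V : ℕ → Ω → ℝ)
    (hindep : iIndepFun V μ)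
    (hexp : ∀ i, IsExpRV μ 2 (V i))
    (hsmall : Tendsto (fun d : ℕ =>
        (Real.log (Real.log d) / Real.log d) *
          ∑ i ∈ Finset.Icc 1 d, |lam i| / (i : ℝ)^2)
      atTop (nhds 0)) :
    ∀ᵐ ω ∂μ, Tendsto (fun d : ℕ =>
        (Real.log (Real.log d) / Real.log d) *
          ∑ i ∈ Finset.Icc 1 d,
            |2 * V i ω / (2 + i * a) - 2 * V i ω / (2 + i * a + lam i)|)
      atTop (nhds 0) := by
  filter_upwards [(hindep.precomp (add_left_injective 1)).ae_exists_tendsto_sum_mul_sub_inv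
      (fun i => hexp (i + 1)) two_pos (summable_sq_abs_div_sq ha.le hlam_lb hlam_ub),
    ae_all_iff.2 fun i => (hexp i).ae_pos] with ω ⟨S, hS⟩ hpos
  have hlim := ((tendsto_log_log_div_log.mul hS).add (hsmall.const_mul 2⁻¹)).const_mul
    (2 / ((1 - β) * a ^ 2))
  rw [zero_mul, mul_zero, zero_add, mul_zero] at hlim
  refine squeeze_zero' ?_ ?_ hlim <;>
    filter_upwards [eventually_log_log_div_log_nonneg] with d hd
  · exact mul_nonneg hd (sum_nonneg fun _ _ => abs_nonneg _)
  · exact (mul_le_mul_of_nonneg_left (sum_abs_div_sub_div_add_le (m := 2⁻¹) ha hβ1 hlam_lb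
      (fun i => (hpos i).le) d) hd).trans_eq (by ring)

theorem perturbed_coupling_L1_distance_vanishes
    {Ω : Type*} [MeasurableSpace Ω] (μ : Measure Ω) [IsProbabilityMeasure μ]
    (a β C : ℝ) (ha : 0 < a) (hβ0 : 0 ≤ β) (hβ1 : β < 1) (hC : 0 < C)
    (lam : ℕ → ℝ)
    (hlam_lb : ∀ i : ℕ, -β * (2 + i * a) ≤ lam i)
    (hlam_ub : ∀ i : ℕ, lam i ≤ C * (2 + i * a))
    (V : ℕ → Ω → ℝ)
    (hindep : iIndepFun V μ)
    (hexp : ∀ i, IsExpRV μ 2 (V i))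
    (hsmall : Tendsto (fun d : ℕ =>
        (Real.log (Real.log d) / Real.log d) *
          ∑ i ∈ Finset.Icc 1 d, |lam i| / (i : ℝ)^2)
      atTop (nhds 0)) :
    ∀ᵐ ω ∂μ, Tendsto (fun d : ℕ =>
        (Real.log (Real.log d) / Real.log d) *
          ∑ i ∈ Finset.Icc 1 d,
            |2 * V i ω / (2 + i * a) - 2 * V i ω / (2 + i * a + lam i)|)
      atTop (nhds 0) :=
  perturbed_coupling_L1_distance_vanishes_general μ a β C ha hβ1 lam hlam_lb hlam_ub V hindep hexp
    hsmall
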